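/- arXiv:2306.14139 — 2 statements merged into one kernel-verified Lean document; each statement's English description precedes it below -/
import Mathlib

section
/- Fix x₀ ∈ ℝⁿ and s > 0, and set c = (4(n−1)·binom(n,k)^{1/k}·s²)^{(n−2)/4}. Then u(x) = c·(s² − |x−x₀|²)^{1−n/2} is a positive k-admissible solution of (*) on the open ball B_s(x₀) with u(x) → ∞ as x → ∂B_s(x₀), and v(x) = c·(|x−x₀|² − s²)^{1−n/2} is a positive k-admissible solution of (*) on ℝⁿ ∖ B̄_s(x₀) with v(x) → ∞ as x → ∂B_s(x₀). -/
open scoped BigOperators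
open Metric Filter

noncomputable section

/-- Euclidean space ℝⁿ. -/
abbrev Eucl (n : ℕ) : Type := EuclideanSpace ℝ (Fin n)

/-- First partial derivative `∂ᵢ u (x)`. -/
def pd (n : ℕ) (u : Eucl n → ℝ) (x : Eucl n) (i : Fin n) : ℝ :=
  fderiv ℝ u x (EuclideanSpace.single i (1 : ℝ))

/-- Second partial derivative `∂ᵢ∂ⱼ u (x)`. -/
def pd2 (n : ℕ) (u : Eucl n → ℝ) (x : Eucl n) (i j : Fin n) : ℝ :=
  fderiv ℝ (fun y => pd n u y j) x (EuclideanSpace.single i (1 : ℝ))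

/-- The matrix `W[u]` with entries
`W_ij[u] = (n−2)∂ᵢ∂ⱼu − (n/u)∂ᵢu ∂ⱼu + (Δu + |∇u|²/u) δᵢⱼ`. -/
def Wmat (n : ℕ) (u : Eucl n → ℝ) (x : Eucl n) : Matrix (Fin n) (Fin n) ℝ :=
  fun i j =>
    ((n : ℝ) - 2) * pd2 n u x i j
      - ((n : ℝ) / u x) * pd n u x i * pd n u x j
      + ((∑ l, pd2 n u x l l) + (∑ l, (pd n u x l) ^ 2) / u x) *
          (if i = j then (1 : ℝ) else 0)

/-- kth elementary symmetric polynomial of a vector in ℝⁿ. -/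
def esymm (n : ℕ) (k : ℕ) (v : Fin n → ℝ) : ℝ :=
  ∑ s ∈ Finset.powersetCard k (Finset.univ : Finset (Fin n)), ∏ i ∈ s, v i

/-- `σ_k(A) := σ_k(λ(A))`, the kth elementary symmetric function of the eigenvalues
of a symmetric matrix (junk value `0` for non-symmetric matrices). -/
def sigmaM (n : ℕ) (k : ℕ) (A : Matrix (Fin n) (Fin n) ℝ) : ℝ :=
  letI := Classical.propDecidable A.IsHermitian
  if h : A.IsHermitian then esymm n k h.eigenvalues else 0

/-- `λ(A) ∈ Γ_k`, i.e. `σ_j(λ(A)) > 0` for `j = 1, …, k`. -/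
def inGammaM (n k : ℕ) (A : Matrix (Fin n) (Fin n) ℝ) : Prop :=
  ∀ j : ℕ, 1 ≤ j → j ≤ k → 0 < sigmaM n j A

/-- `v ∈ Γ_k` for vectors. -/
def inGammaV (n k : ℕ) (v : Fin n → ℝ) : Prop :=
  ∀ j : ℕ, 1 ≤ j → j ≤ k → 0 < esymm n j v

/-- The Garding cone `Γ_k` as a subset of ℝⁿ. -/
def GammaSet (n k : ℕ) : Set (Fin n → ℝ) := {v | inGammaV n k v}

/-- k-admissibility of a function on a set. -/
def Admissible (n k : ℕ) (s : Set (Eucl n)) (u : Eucl n → ℝ) : Prop :=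
  ∀ x ∈ s, inGammaM n k (Wmat n u x)

/-- Equation (*): `σ_k^{1/k}(W[u]) = ((n−2)/2) u^{(n+2)/(n−2)}` at a point. -/
def EqStar (n k : ℕ) (u : Eucl n → ℝ) (x : Eucl n) : Prop :=
  (sigmaM n k (Wmat n u x)) ^ ((1 : ℝ) / k)
    = (((n : ℝ) - 2) / 2) * (u x) ^ (((n : ℝ) + 2) / ((n : ℝ) - 2))

/-- `S` is a (nonempty) compact smooth embedded submanifold of ℝⁿ of codimension `m`:
locally a regular level set of a smooth submersion. -/
def IsSmoothCompactSubmanifold (n m : ℕ) (S : Set (Eucl n)) : Prop :=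
  IsCompact S ∧ S.Nonempty ∧
    ∀ x ∈ S, ∃ U : Set (Eucl n), IsOpen U ∧ x ∈ U ∧
      ∃ φ : Eucl n → EuclideanSpace ℝ (Fin m),
        ContDiffOn ℝ (⊤ : ℕ∞) φ U ∧
        (∀ y ∈ U, Function.Surjective (fderiv ℝ φ y)) ∧
        S ∩ U = {y ∈ U | φ y = 0}

/-- `u(x) → ∞` as `x → ∂Ω`. -/
def BlowsUpAtBoundary (n : ℕ) (Ω : Set (Eucl n)) (u : Eucl n → ℝ) : Prop :=
  ∀ C : ℝ, ∃ δ > (0 : ℝ), ∀ x ∈ Ω, Metric.infDist x (frontier Ω) < δ → C < u x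

/-- `ρ(x)^{n/2−1} u(x) → L` as `x → ∂Ω`, where `ρ(x) = dist(x, ∂Ω)`. -/
def BoundaryRate (n : ℕ) (Ω : Set (Eucl n)) (u : Eucl n → ℝ) (L : ℝ) : Prop :=
  ∀ ε > (0 : ℝ), ∃ δ > (0 : ℝ), ∀ x ∈ Ω, Metric.infDist x (frontier Ω) < δ →
    |(Metric.infDist x (frontier Ω)) ^ ((n : ℝ) / 2 - 1) * u x - L| < ε

/-- `((n−1)·binom(n,k)^{1/k})^{(n−2)/4}`. -/
def growthConst (n k : ℕ) : ℝ :=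
  (((n : ℝ) - 1) * ((n.choose k : ℝ) ^ ((1 : ℝ) / k))) ^ (((n : ℝ) - 2) / 4)

/-- `(4(n−1)·binom(n,k)^{1/k}·s²)^{(n−2)/4}`. -/
def ballConst (n k : ℕ) (s : ℝ) : ℝ :=
  (4 * ((n : ℝ) - 1) * ((n.choose k : ℝ) ^ ((1 : ℝ) / k)) * s ^ 2) ^ (((n : ℝ) - 2) / 4)

/-- The vector `v_m` whose first `n−m+1` coordinates equal `n−m` and whose
last `m−1` coordinates equal `2−m`. -/
def vvec (n m : ℕ) : Fin n → ℝ :=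
  fun i => if (i : ℕ) < n - m + 1 then (n : ℝ) - (m : ℝ) else 2 - (m : ℝ)

/-- `(2/(n−2)) u^{−(n+2)/(n−2)} W[u]`. -/
def Wscaled (n : ℕ) (u : Eucl n → ℝ) (x : Eucl n) : Matrix (Fin n) (Fin n) ℝ :=
  ((2 / ((n : ℝ) - 2)) * (u x) ^ (-(((n : ℝ) + 2) / ((n : ℝ) - 2)))) • Wmat n u x

/-- Equation (**): `σ_k((2/(n−2))u^{−(n+2)/(n−2)}W[u]) + α σ_{k−1}(…) = α₀` at a point. -/
def EqGen (n k : ℕ) (α α₀ : Eucl n → ℝ) (u : Eucl n → ℝ) (x : Eucl n) : Prop :=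
  sigmaM n k (Wscaled n u x) + α x * sigmaM n (k - 1) (Wscaled n u x) = α₀ x

/-- Subsolution of (*) on a set. -/
def IsSubsolutionStar (n k : ℕ) (s : Set (Eucl n)) (u : Eucl n → ℝ) : Prop :=
  ∀ x ∈ s, inGammaM n k (Wmat n u x) ∧
    (((n : ℝ) - 2) / 2) * (u x) ^ (((n : ℝ) + 2) / ((n : ℝ) - 2))
      ≤ (sigmaM n k (Wmat n u x)) ^ ((1 : ℝ) / k)

/-- Supersolution of (*) on a set. -/
def IsSupersolutionStar (n k : ℕ) (s : Set (Eucl n)) (u : Eucl n → ℝ) : Prop :=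
  ∀ x ∈ s, ¬ inGammaM n k (Wmat n u x) ∨
    (sigmaM n k (Wmat n u x)) ^ ((1 : ℝ) / k)
      ≤ (((n : ℝ) - 2) / 2) * (u x) ^ (((n : ℝ) + 2) / ((n : ℝ) - 2))

/-- The matrix `𝒲[v] = ∇²v − ∇v⊗∇v + (Δv/(n−2) + |∇v|²)·I`. -/
def calW (n : ℕ) (v : Eucl n → ℝ) (x : Eucl n) : Matrix (Fin n) (Fin n) ℝ :=
  fun i j =>
    pd2 n v x i j - pd n v x i * pd n v x j
      + ((∑ l, pd2 n v x l l) / ((n : ℝ) - 2) + ∑ l, (pd n v x l) ^ 2) *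
          (if i = j then (1 : ℝ) else 0)

/-- Equation (***): `σ_k((n−2)e^{−2v}𝒲[v]) + α σ_{k−1}((n−2)e^{−2v}𝒲[v]) = α₀` at a point. -/
def EqTriple (n k : ℕ) (α α₀ v : Eucl n → ℝ) (x : Eucl n) : Prop :=
  sigmaM n k ((((n : ℝ) - 2) * Real.exp (-2 * v x)) • calW n v x)
    + α x * sigmaM n (k - 1) ((((n : ℝ) - 2) * Real.exp (-2 * v x)) • calW n v x)
    = α₀ x

/-- The operator `G[v] = σ_k(𝒲[v])/σ_{k−1}(𝒲[v]) − (α₀ e^{2kv}/(n−2)^k)·(1/σ_{k−1}(𝒲[v]))`. -/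
def Gop (n k : ℕ) (α₀ : Eucl n → ℝ) (v : Eucl n → ℝ) (x : Eucl n) : ℝ :=
  sigmaM n k (calW n v x) / sigmaM n (k - 1) (calW n v x)
    - (α₀ x * Real.exp (2 * (k : ℝ) * v x) / ((n : ℝ) - 2) ^ k)
        * (1 / sigmaM n (k - 1) (calW n v x))

/-!
Write `g = a‖x - x₀‖² + b` and `u = c gᵖ` with `p = 1 - n/2`. For a radial function the matrix
`W[u]` is a multiple of the identity plus a multiple of `(x - x₀)(x - x₀)ᵀ`; for `u = c gᵖ` the
second coefficient carries the factor `(n - 2)(p - 1) - n p`, which vanishes exactly for this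
exponent, and the first collapses to `μ = -2c(n - 1)(n - 2) a b g^(-(n+2)/2)`. With `a b = -s²`
we get `μ > 0`, hence `σⱼ(W[u]) = C(n,j) μʲ > 0` for all `j ≤ n`, and `ballConst` is the `c` with
`c^(4/(n-2)) = 4(n - 1) C(n,k)^(1/k) s²`, which is exactly what `(*)` asks for. The ball is the case
`a = -1, b = s²`, the exterior of the ball `a = 1, b = -s²`; as `p < 0` and `g → 0` at the sphere,
both solutions blow up there.
-/

open Topology

section RadialFunctions

variable {n : ℕ}

lemma innerSL_apply_single (v : Eucl n) (i : Fin n) :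
    innerSL ℝ v (EuclideanSpace.single i 1) = v i := by
  simp [EuclideanSpace.inner_single_right]

variable (x₀ : Eucl n)

lemma hasFDerivAt_norm_sub_sq (x : Eucl n) :
    HasFDerivAt (fun y : Eucl n => ‖y - x₀‖ ^ 2) ((2 : ℕ) • innerSL ℝ (x - x₀)) x := by
  simpa using ((hasFDerivAt_id x).sub_const x₀).norm_sq

lemma hasFDerivAt_radial {φ : ℝ → ℝ} {φ' : ℝ} {x : Eucl n}
    (hφ : HasDerivAt φ φ' (‖x - x₀‖ ^ 2)) :
    HasFDerivAt (fun y => φ (‖y - x₀‖ ^ 2)) (φ' • (2 : ℕ) • innerSL ℝ (x - x₀)) x :=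
  hφ.comp_hasFDerivAt x (hasFDerivAt_norm_sub_sq x₀ x)

lemma pd_radial {φ : ℝ → ℝ} {φ' : ℝ} {x : Eucl n}
    (hφ : HasDerivAt φ φ' (‖x - x₀‖ ^ 2)) (i : Fin n) :
    pd n (fun y => φ (‖y - x₀‖ ^ 2)) x i = 2 * φ' * (x i - x₀ i) := by
  rw [pd, (hasFDerivAt_radial x₀ hφ).fderiv]
  simp only [smul_apply, innerSL_apply_single, PiLp.sub_apply, nsmul_eq_mul, Nat.cast_ofNat,
    smul_eq_mul]
  ring

lemma pd2_radial {φ φ' : ℝ → ℝ} {φ'' : ℝ} {x : Eucl n}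
    (hφ : ∀ᶠ t in 𝓝 (‖x - x₀‖ ^ 2), HasDerivAt φ (φ' t) t)
    (hφ' : HasDerivAt φ' φ'' (‖x - x₀‖ ^ 2)) (i j : Fin n) :
    pd2 n (fun y => φ (‖y - x₀‖ ^ 2)) x i j
      = 2 * φ' (‖x - x₀‖ ^ 2) * (if i = j then 1 else 0)
        + 4 * φ'' * (x i - x₀ i) * (x j - x₀ j) := by
  have hpd : (fun y => pd n (fun y => φ (‖y - x₀‖ ^ 2)) y j)
      =ᶠ[𝓝 x] fun y => 2 * φ' (‖y - x₀‖ ^ 2) * (y j - x₀ j) := by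
    have hcont : Continuous fun y : Eucl n => ‖y - x₀‖ ^ 2 := by fun_prop
    filter_upwards [hcont.continuousAt.eventually hφ] with y hy using pd_radial x₀ hy j
  have hderiv := ((hasFDerivAt_radial x₀ hφ').const_mul 2).fun_mul
    ((PiLp.hasFDerivAt_apply 2 x j).sub_const (x₀ j))
  rw [pd2, hpd.fderiv_eq, hderiv.fderiv]
  simp only [add_apply, smul_apply, innerSL_apply_single, PiLp.proj_apply, PiLp.single_apply,
    PiLp.sub_apply, eq_comm, nsmul_eq_mul, Nat.cast_ofNat, smul_eq_mul]
  ring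
lemma Wmat_radial {φ φ' : ℝ → ℝ} {φ'' : ℝ} {x : Eucl n}
    (hφ : ∀ᶠ t in 𝓝 (‖x - x₀‖ ^ 2), HasDerivAt φ (φ' t) t)
    (hφ' : HasDerivAt φ' φ'' (‖x - x₀‖ ^ 2)) :
    Wmat n (fun y => φ (‖y - x₀‖ ^ 2)) x
      = (4 * ((n : ℝ) - 1) * φ' (‖x - x₀‖ ^ 2)
          + 4 * ‖x - x₀‖ ^ 2 * (φ'' + φ' (‖x - x₀‖ ^ 2) ^ 2 / φ (‖x - x₀‖ ^ 2))) • 1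
        + (4 * (((n : ℝ) - 2) * φ'' - n * φ' (‖x - x₀‖ ^ 2) ^ 2 / φ (‖x - x₀‖ ^ 2)))
          • Matrix.vecMulVec (fun i => x i - x₀ i) (fun i => x i - x₀ i) := by
  have hnorm : ‖x - x₀‖ ^ 2 = ∑ l, (x l - x₀ l) ^ 2 := by
    simp [EuclideanSpace.real_norm_sq_eq]
  have hlap : ∑ l, pd2 n (fun y => φ (‖y - x₀‖ ^ 2)) x l l
      = 2 * n * φ' (‖x - x₀‖ ^ 2) + 4 * φ'' * ‖x - x₀‖ ^ 2 := by
    simp only [pd2_radial x₀ hφ hφ', if_true, Finset.sum_add_distrib, Finset.sum_const,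
      Finset.card_univ, Fintype.card_fin, nsmul_eq_mul, hnorm, Finset.mul_sum]
    ring_nf
  have hgrad : ∑ l, pd n (fun y => φ (‖y - x₀‖ ^ 2)) x l ^ 2
      = 4 * φ' (‖x - x₀‖ ^ 2) ^ 2 * ‖x - x₀‖ ^ 2 := by
    simp only [pd_radial x₀ hφ.self_of_nhds, hnorm, Finset.mul_sum]
    ring_nf
  ext i j
  rw [Wmat, hlap, hgrad, pd_radial x₀ hφ.self_of_nhds, pd_radial x₀ hφ.self_of_nhds,
    pd2_radial x₀ hφ hφ']
  simp only [Matrix.add_apply, Matrix.smul_apply, Matrix.one_apply, Matrix.vecMulVec_apply,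
    smul_eq_mul]
  split_ifs <;> ring

lemma hasDerivAt_const_mul_affine_rpow (a b c p : ℝ) {t : ℝ} (ht : a * t + b ≠ 0) :
    HasDerivAt (fun t => c * (a * t + b) ^ p) (c * p * a * (a * t + b) ^ (p - 1)) t := by
  have h := ((((hasDerivAt_id t).const_mul a).add_const b).rpow_const (p := p)
    (Or.inl ht)).const_mul c
  exact h.congr_deriv (by simp only [id]; ring)

lemma Wmat_const_mul_rpow {a b c : ℝ} {x : Eucl n} (hx : 0 < a * ‖x - x₀‖ ^ 2 + b) :
    Wmat n (fun y => c * (a * ‖y - x₀‖ ^ 2 + b) ^ (1 - (n : ℝ) / 2)) x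
      = (-2 * c * ((n : ℝ) - 1) * ((n : ℝ) - 2) * a * b
          * (a * ‖x - x₀‖ ^ 2 + b) ^ (-((n : ℝ) + 2) / 2)) • 1 := by
  set p : ℝ := 1 - (n : ℝ) / 2 with hp
  have hpos : ∀ᶠ t in 𝓝 (‖x - x₀‖ ^ 2), 0 < a * t + b :=
    (continuous_const.mul continuous_id |>.add continuous_const).continuousAt.eventually
      (lt_mem_nhds hx)
  rw [Wmat_radial x₀ (φ' := fun t => c * p * a * (a * t + b) ^ (p - 1))
    (hpos.mono fun t ht => hasDerivAt_const_mul_affine_rpow a b c p ht.ne')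
    (by simpa [mul_assoc] using
      (hasDerivAt_const_mul_affine_rpow a b (c * p * a) (p - 1) hx.ne'))]
  set t := ‖x - x₀‖ ^ 2
  set g := a * t + b with hg
  have hg1 : g ^ (p - 1) = g ^ (p - 2) * g := by
    rw [show p - 1 = p - 2 + 1 by ring, Real.rpow_add_one hx.ne']
  have hg0 : g ^ p = g ^ (p - 2) * g ^ 2 := by
    rw [← Real.rpow_natCast, ← Real.rpow_add hx]; ring_nf
  have hexp : -((n : ℝ) + 2) / 2 = p - 2 := by rw [hp]; ring
  rw [hexp, hg1, hg0, show p - 1 - 1 = p - 2 by ring]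
  rcases eq_or_ne c 0 with rfl | hc
  · simp
  have hquot : (c * p * a * (g ^ (p - 2) * g)) ^ 2 / (c * (g ^ (p - 2) * g ^ 2))
      = c * p ^ 2 * a ^ 2 * g ^ (p - 2) := by
    field_simp
  have hβ : ((n : ℝ) - 2) * (c * (p * (a * ((p - 1) * (a * g ^ (p - 2))))))
      - n * (c * p * a * (g ^ (p - 2) * g)) ^ 2 / (c * (g ^ (p - 2) * g ^ 2)) = 0 := by
    rw [mul_div_assoc, hquot, hp]; ring
  rw [hβ, hquot, mul_zero, zero_smul, add_zero]
  congr 1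
  linear_combination (4 * c * p * a * ((n : ℝ) - 1) * g ^ (p - 2)) * hg
    + (4 * c * ((n : ℝ) - 1) * a * b * g ^ (p - 2)) * hp

end RadialFunctions

section ScalarMatrix

variable {n : ℕ}

lemma eigenvalues_smul_one {μ : ℝ} (h : (μ • (1 : Matrix (Fin n) (Fin n) ℝ)).IsHermitian)
    (i : Fin n) : h.eigenvalues i = μ := by
  have : Nonempty (Fin n) := ⟨i⟩
  simpa [← Algebra.algebraMap_eq_smul_one, spectrum.scalar_eq] using
    h.eigenvalues_mem_spectrum_real i

lemma esymm_const (j : ℕ) (μ : ℝ) : esymm n j (fun _ => μ) = n.choose j * μ ^ j := by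
  rw [esymm, Finset.sum_congr rfl fun s hs => by
    rw [Finset.prod_const, (Finset.mem_powersetCard.mp hs).2], Finset.sum_const,
    Finset.card_powersetCard, Finset.card_univ, Fintype.card_fin, nsmul_eq_mul]

lemma sigmaM_smul_one (j : ℕ) (μ : ℝ) :
    sigmaM n j (μ • (1 : Matrix (Fin n) (Fin n) ℝ)) = n.choose j * μ ^ j := by
  have h : (μ • (1 : Matrix (Fin n) (Fin n) ℝ)).IsHermitian := by
    simp [Matrix.IsHermitian]
  rw [sigmaM, dif_pos h, funext (eigenvalues_smul_one h), esymm_const]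

lemma inGammaM_smul_one {k : ℕ} (hkn : k ≤ n) {μ : ℝ} (hμ : 0 < μ) :
    inGammaM n k (μ • 1) := fun j _ hjk => by
  have : 0 < n.choose j := Nat.choose_pos (hjk.trans hkn)
  rw [sigmaM_smul_one]
  positivity

end ScalarMatrix

section BallConst

variable {n k : ℕ} {s : ℝ}

lemma ballConst_pos (hn : 1 < n) (hkn : k ≤ n) (hs : s ≠ 0) : 0 < ballConst n k s := by
  have : (0 : ℝ) < n - 1 := by
    rw [sub_pos]; exact_mod_cast hn
  have : (0 : ℝ) < n.choose k := by exact_mod_cast Nat.choose_pos hkn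
  unfold ballConst
  positivity

lemma ballConst_rpow (hn : 2 < n) :
    ballConst n k s ^ (4 / ((n : ℝ) - 2))
      = 4 * ((n : ℝ) - 1) * (n.choose k : ℝ) ^ ((1 : ℝ) / k) * s ^ 2 := by
  have : (0 : ℝ) < n - 2 := by
    rw [sub_pos]; exact_mod_cast hn
  have : (0 : ℝ) ≤ n - 1 := by linarith
  rw [ballConst, ← Real.rpow_mul (by positivity),
    div_mul_div_cancel₀' (by positivity), div_self four_ne_zero, Real.rpow_one]

end BallConst

section BlowUp

lemma exists_forall_lt_const_mul_rpow {c p : ℝ} (hc : 0 < c) (hp : p < 0) (C : ℝ) :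
    ∃ ε > 0, ∀ g : ℝ, 0 < g → g < ε → C < c * g ^ p := by
  have h := ((tendsto_rpow_neg_nhdsGT_zero hp).const_mul_atTop hc).eventually_gt_atTop C
  obtain ⟨ε, hε, hball⟩ := Metric.mem_nhdsWithin_iff.mp h
  refine ⟨ε, hε, fun g hg hgε => hball ⟨?_, hg⟩⟩
  rwa [Metric.mem_ball, Real.dist_0_eq_abs, abs_of_pos hg]

variable {E : Type*} [SeminormedAddCommGroup E] {c p s : ℝ}

lemma exists_forall_ball_lt_const_mul_rpow (hc : 0 < c) (hp : p < 0) (hs : 0 < s)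
    (x₀ : E) (C : ℝ) :
    ∃ δ > 0, ∀ x ∈ Metric.ball x₀ s, s - dist x x₀ < δ →
      C < c * (s ^ 2 - ‖x - x₀‖ ^ 2) ^ p := by
  obtain ⟨ε, hε, hlt⟩ := exists_forall_lt_const_mul_rpow hc hp C
  refine ⟨ε / (2 * s), by positivity, fun x hx hδ => hlt _ ?_ ?_⟩
  all_goals
    rw [Metric.mem_ball, dist_eq_norm] at hx
    rw [dist_eq_norm, lt_div_iff₀ (by positivity)] at hδ
    nlinarith [norm_nonneg (x - x₀)]

lemma exists_forall_compl_closedBall_lt_const_mul_rpow (hc : 0 < c) (hp : p < 0) (hs : 0 < s)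
    (x₀ : E) (C : ℝ) :
    ∃ δ > 0, ∀ x ∈ (Metric.closedBall x₀ s)ᶜ, dist x x₀ - s < δ →
      C < c * (‖x - x₀‖ ^ 2 - s ^ 2) ^ p := by
  obtain ⟨ε, hε, hlt⟩ := exists_forall_lt_const_mul_rpow hc hp C
  refine ⟨min s (ε / (3 * s)), by positivity, fun x hx hδ => hlt _ ?_ ?_⟩
  all_goals
    rw [Set.mem_compl_iff, Metric.mem_closedBall, not_le, dist_eq_norm] at hx
    rw [dist_eq_norm, lt_min_iff, lt_div_iff₀ (by positivity)] at hδ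
    nlinarith

end BlowUp

theorem radial_pos_inGammaM_eqStar {n k : ℕ} (x₀ : Eucl n) (hn : 3 ≤ n) (hk : 1 ≤ k) (hkn : k ≤ n) {a b s : ℝ}
    (hs : s ≠ 0) (hab : a * b = -s ^ 2) {u : Eucl n → ℝ}
    (hu : ∀ y, u y = ballConst n k s * (a * ‖y - x₀‖ ^ 2 + b) ^ (1 - (n : ℝ) / 2))
    {x : Eucl n} (hx : 0 < a * ‖x - x₀‖ ^ 2 + b) :
    0 < u x ∧ inGammaM n k (Wmat n u x) ∧ EqStar n k u x := by
  have hn2 : (0 : ℝ) < n - 2 := by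
    rw [sub_pos]; exact_mod_cast hn
  have hc := ballConst_pos (by omega) hkn hs
  set c := ballConst n k s
  set μ := 2 * c * ((n : ℝ) - 1) * ((n : ℝ) - 2) * s ^ 2
    * (a * ‖x - x₀‖ ^ 2 + b) ^ (-((n : ℝ) + 2) / 2)
  have hW : Wmat n u x = μ • 1 := by
    rw [funext hu, Wmat_const_mul_rpow x₀ hx]
    congr 1
    linear_combination
      (-2 * c * ((n : ℝ) - 1) * ((n : ℝ) - 2) * (a * ‖x - x₀‖ ^ 2 + b) ^ (-((n : ℝ) + 2) / 2))
        * hab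
  have hμ : 0 < μ := by
    have : 0 < (a * ‖x - x₀‖ ^ 2 + b) ^ (-((n : ℝ) + 2) / 2) := Real.rpow_pos_of_pos hx _
    have : (0 : ℝ) < n - 1 := by linarith
    positivity
  refine ⟨hu x ▸ by positivity, hW ▸ inGammaM_smul_one hkn hμ, ?_⟩
  have hlhs : (n.choose k * μ ^ k) ^ ((1 : ℝ) / k) = (n.choose k : ℝ) ^ ((1 : ℝ) / k) * μ := by
    rw [Real.mul_rpow (by positivity) (by positivity), one_div,
      Real.pow_rpow_inv_natCast hμ.le (by omega)]
  have hc_pow : c ^ (((n : ℝ) + 2) / ((n : ℝ) - 2)) = c * c ^ (4 / ((n : ℝ) - 2)) := by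
    rw [← Real.rpow_one_add' hc.le (by positivity)]
    congr 1
    field_simp
    ring
  have hg_pow : ((a * ‖x - x₀‖ ^ 2 + b) ^ (1 - (n : ℝ) / 2)) ^ (((n : ℝ) + 2) / ((n : ℝ) - 2))
      = (a * ‖x - x₀‖ ^ 2 + b) ^ (-((n : ℝ) + 2) / 2) := by
    rw [← Real.rpow_mul hx.le]
    congr 1
    field_simp
    ring
  rw [EqStar, hW, sigmaM_smul_one, hlhs, hu, Real.mul_rpow hc.le (by positivity), hc_pow,
    ballConst_rpow (by omega), hg_pow]
  ring

/-- Explicit radial solutions of (*) on a ball and on the exterior of a ball,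
blowing up at the sphere. -/
theorem stmt7 (n k : ℕ) (hn : 3 ≤ n) (hk1 : 1 ≤ k) (hkn : k ≤ n)
    (x₀ : Eucl n) (s : ℝ) (hs : 0 < s)
    (u v : Eucl n → ℝ)
    (hu : ∀ x, u x = ballConst n k s * (s ^ 2 - ‖x - x₀‖ ^ 2) ^ (1 - (n : ℝ) / 2))
    (hv : ∀ x, v x = ballConst n k s * (‖x - x₀‖ ^ 2 - s ^ 2) ^ (1 - (n : ℝ) / 2)) :
    ((∀ x ∈ Metric.ball x₀ s, 0 < u x) ∧
      Admissible n k (Metric.ball x₀ s) u ∧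
      (∀ x ∈ Metric.ball x₀ s, EqStar n k u x) ∧
      (∀ C : ℝ, ∃ δ > (0 : ℝ), ∀ x ∈ Metric.ball x₀ s, s - dist x x₀ < δ → C < u x)) ∧
    ((∀ x ∈ (Metric.closedBall x₀ s)ᶜ, 0 < v x) ∧
      Admissible n k (Metric.closedBall x₀ s)ᶜ v ∧
      (∀ x ∈ (Metric.closedBall x₀ s)ᶜ, EqStar n k v x) ∧
      (∀ C : ℝ, ∃ δ > (0 : ℝ), ∀ x ∈ (Metric.closedBall x₀ s)ᶜ,
        dist x x₀ - s < δ → C < v x)) := by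
  have hc := ballConst_pos (by omega) hkn hs.ne'
  have hp : 1 - (n : ℝ) / 2 < 0 := by
    have : (3 : ℝ) ≤ n := by exact_mod_cast hn
    linarith
  have hu_sol : ∀ x ∈ ball x₀ s, 0 < u x ∧ inGammaM n k (Wmat n u x) ∧ EqStar n k u x :=
    fun x hx => radial_pos_inGammaM_eqStar x₀ hn hk1 hkn hs.ne' (a := -1) (b := s ^ 2)
      (by ring)
      (fun y => by rw [hu, neg_one_mul, neg_add_eq_sub])
      (by rw [mem_ball, dist_eq_norm] at hx; nlinarith [norm_nonneg (x - x₀)])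
  have hv_sol :
      ∀ x ∈ (closedBall x₀ s)ᶜ, 0 < v x ∧ inGammaM n k (Wmat n v x) ∧ EqStar n k v x :=
    fun x hx => radial_pos_inGammaM_eqStar x₀ hn hk1 hkn hs.ne' (a := 1) (b := -s ^ 2)
      (by ring)
      (fun y => by rw [hv, one_mul, ← sub_eq_add_neg])
      (by rw [Set.mem_compl_iff, mem_closedBall, not_le, dist_eq_norm] at hx; nlinarith)
  refine ⟨⟨fun x hx => (hu_sol x hx).1, fun x hx => (hu_sol x hx).2.1,
      fun x hx => (hu_sol x hx).2.2, fun C => ?_⟩,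
    ⟨fun x hx => (hv_sol x hx).1, fun x hx => (hv_sol x hx).2.1,
      fun x hx => (hv_sol x hx).2.2, fun C => ?_⟩⟩
  · simpa only [hu] using exists_forall_ball_lt_const_mul_rpow hc hp hs x₀ C
  · simpa only [hv] using exists_forall_compl_closedBall_lt_const_mul_rpow hc hp hs x₀ C
end
end

section
/- There does not exist a positive k-admissible C² solution of (*) on all of ℝⁿ. -/
open scoped BigOperators
open Metric Filter

noncomputable section

/-!
On `Γ_k` one has `σ_k ≤ C(n,k) σ₁^k` (for `k ≥ 2` because `σ₁² = ∑ λᵢ² + 2σ₂` bounds every `|λᵢ|`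
by `σ₁`), and `σ₁(W[u]) = tr W[u] = 2(n-1) Δu`. So a solution of (*) satisfies `Δu ≥ c u^p` with
`p = (n+2)/(n-2) > 1` and `c > 0`, and by Keller–Osserman such a `u` cannot be entire: on the ball
`B_R` the barrier `U = A (R² - |y|²)^(-α)`, `α = 2/(p-1)`, `A ∼ R^α`, satisfies `ΔU ≤ c U^p` and
blows up on `∂B_R`, so comparing `u` and `U` at a maximum of `u - U` gives
`u(0) ≤ U(0) = O(R^(-α))`, and `R → ∞` contradicts `u(0) > 0`.
-/

open Topology

def laplace (n : ℕ) (u : Eucl n → ℝ) (x : Eucl n) : ℝ := ∑ l, pd2 n u x l l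

local notation "𝐞" i => EuclideanSpace.single i (1 : ℝ)

section GardingCone

variable {n : ℕ}

theorem eval_esymm (k : ℕ) (v : Fin n → ℝ) :
    MvPolynomial.eval v (MvPolynomial.esymm (Fin n) ℝ k) = esymm n k v := by
  simp [MvPolynomial.esymm, esymm]

theorem esymm_one (v : Fin n → ℝ) : esymm n 1 v = ∑ i, v i := by
  simp [← eval_esymm, MvPolynomial.esymm_one]

theorem two_mul_esymm_two (v : Fin n → ℝ) :
    2 * esymm n 2 v = esymm n 1 v ^ 2 - ∑ i, v i ^ 2 := by
  have newton : 2 * esymm n 2 v = (-1) ^ 3 * (∑ i, v i ^ 2 + -((∑ i, v i) * ∑ i, v i)) := by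
    simpa [Finset.sum_filter, Finset.Nat.sum_antidiagonal_eq_sum_range_succ_mk,
      Finset.sum_range_succ, MvPolynomial.psum, eval_esymm] using
      congrArg (MvPolynomial.eval v) (MvPolynomial.mul_esymm_eq_sum (Fin n) ℝ 2)
  rw [newton, esymm_one]
  ring

theorem abs_le_esymm_one {v : Fin n → ℝ} (h1 : 0 ≤ esymm n 1 v) (h2 : 0 ≤ esymm n 2 v)
    (i : Fin n) : |v i| ≤ esymm n 1 v := by
  refine abs_le_of_sq_le_sq ?_ h1
  calc v i ^ 2 ≤ ∑ j, v j ^ 2 :=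
        Finset.single_le_sum (fun j _ => sq_nonneg (v j)) (Finset.mem_univ i)
    _ ≤ esymm n 1 v ^ 2 := by linarith [two_mul_esymm_two v]

theorem esymm_le_choose_mul_pow {k : ℕ} {v : Fin n → ℝ} (hv : inGammaV n k v) (hk : 1 ≤ k) :
    esymm n k v ≤ n.choose k * esymm n 1 v ^ k := by
  have h1 := hv 1 le_rfl hk
  obtain rfl | hk2 := hk.eq_or_lt
  · have hn : (1 : ℝ) ≤ n := by
      rcases n with _ | n
      · simp [esymm_one] at h1
      · simp
    simp only [Nat.choose_one_right, pow_one]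
    nlinarith
  calc esymm n k v
      ≤ ∑ s ∈ Finset.powersetCard k (Finset.univ : Finset (Fin n)), esymm n 1 v ^ k := by
        refine Finset.sum_le_sum fun s hs => ?_
        calc ∏ i ∈ s, v i ≤ ∏ i ∈ s, |v i| := (le_abs_self _).trans (Finset.abs_prod s v).le
          _ ≤ ∏ i ∈ s, esymm n 1 v := Finset.prod_le_prod (fun i _ => abs_nonneg _)
              fun i _ => abs_le_esymm_one h1.le (hv 2 one_le_two hk2).le i
          _ = esymm n 1 v ^ k := by rw [Finset.prod_const, (Finset.mem_powersetCard.mp hs).2]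
    _ = n.choose k * esymm n 1 v ^ k := by simp

theorem esymm_rpow_inv_le {k : ℕ} {v : Fin n → ℝ} (hv : inGammaV n k v) (hk : 1 ≤ k) :
    esymm n k v ^ (1 / k : ℝ) ≤ (n.choose k : ℝ) ^ (1 / k : ℝ) * esymm n 1 v := by
  have h1 := (hv 1 le_rfl hk).le
  calc esymm n k v ^ (1 / k : ℝ) ≤ (n.choose k * esymm n 1 v ^ k) ^ (1 / k : ℝ) :=
        Real.rpow_le_rpow (hv k hk le_rfl).le (esymm_le_choose_mul_pow hv hk) (by positivity)
    _ = (n.choose k : ℝ) ^ (1 / k : ℝ) * esymm n 1 v := by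
        rw [Real.mul_rpow (by positivity) (by positivity), one_div,
          Real.pow_rpow_inv_natCast h1 (by omega)]

-- `sigmaM` is `0` off the Hermitian matrices, so `σ₁ > 0` already forces `A` to be Hermitian.
theorem isHermitian_of_inGammaM {k : ℕ} {A : Matrix (Fin n) (Fin n) ℝ} (hA : inGammaM n k A)
    (hk : 1 ≤ k) : A.IsHermitian := by
  by_contra h
  have h1 := hA 1 le_rfl hk
  rw [sigmaM, dif_neg h] at h1
  exact h1.false

theorem sigmaM_rpow_inv_le_trace {k : ℕ} {A : Matrix (Fin n) (Fin n) ℝ} (hA : inGammaM n k A)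
    (hk : 1 ≤ k) : sigmaM n k A ^ (1 / k : ℝ) ≤ (n.choose k : ℝ) ^ (1 / k : ℝ) * A.trace := by
  have hH := isHermitian_of_inGammaM hA hk
  have hσ (j : ℕ) : sigmaM n j A = esymm n j hH.eigenvalues := by rw [sigmaM, dif_pos hH]
  have htr : A.trace = esymm n 1 hH.eigenvalues := by
    simp [hH.trace_eq_sum_eigenvalues, esymm_one]
  rw [hσ, htr]
  exact esymm_rpow_inv_le (fun j hj hjk => hσ j ▸ hA j hj hjk) hk

theorem trace_Wmat {u : Eucl n → ℝ} {x : Eucl n} (hux : u x ≠ 0) :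
    (Wmat n u x).trace = 2 * (n - 1) * laplace n u x := by
  simp only [Matrix.trace, Matrix.diag, Wmat, if_pos, Finset.sum_add_distrib,
    Finset.sum_sub_distrib, ← Finset.mul_sum, Finset.sum_const, Finset.card_univ,
    Fintype.card_fin, nsmul_eq_mul, laplace, mul_assoc, ← sq]
  field_simp
  ring

theorem mul_rpow_le_laplace_of_eqStar {k : ℕ} (hn : 3 ≤ n) (hk : 1 ≤ k) (hkn : k ≤ n)
    {u : Eucl n → ℝ} {x : Eucl n} (hux : 0 < u x) (hW : inGammaM n k (Wmat n u x))
    (hEq : EqStar n k u x) :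
    ((n : ℝ) - 2) / (4 * ((n : ℝ) - 1) * (n.choose k : ℝ) ^ ((1 : ℝ) / k)) *
      u x ^ (((n : ℝ) + 2) / ((n : ℝ) - 2)) ≤ laplace n u x := by
  have hC : 0 < (n.choose k : ℝ) ^ ((1 : ℝ) / k) :=
    Real.rpow_pos_of_pos (by exact_mod_cast Nat.choose_pos hkn) _
  have hn' : (3 : ℝ) ≤ n := by exact_mod_cast hn
  have key := sigmaM_rpow_inv_le_trace hW hk
  rw [hEq, trace_Wmat hux.ne'] at key
  rw [div_mul_eq_mul_div, div_le_iff₀ (by nlinarith)]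
  linarith

end GardingCone

theorem IsLocalMax.second_deriv_nonpos {ψ φ : ℝ → ℝ} {a s : ℝ} (hmax : IsLocalMax ψ a)
    (hψ : ∀ᶠ t in 𝓝 a, HasDerivAt ψ (φ t) t) (hφ : HasDerivAt φ s a) : s ≤ 0 := by
  -- For `s > 0` the second derivative test makes `a` a local minimum as well, so `ψ` is locally
  -- constant and `s = 0`.
  by_contra! hs
  have hderiv : deriv ψ =ᶠ[𝓝 a] φ := hψ.mono fun t ht => ht.deriv
  have hmin : IsLocalMin ψ a :=
    isLocalMin_of_deriv_deriv_pos (by rwa [hderiv.deriv_eq, hφ.deriv])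
      (by rw [hderiv.eq_of_nhds]; exact hmax.hasDerivAt_eq_zero hψ.self_of_nhds)
      hψ.self_of_nhds.continuousAt
  have hconst : ψ =ᶠ[𝓝 a] fun _ => ψ a :=
    (hmax.and hmin).mono fun t h => le_antisymm h.1 h.2
  have hφ0 : (fun _ => (0 : ℝ)) =ᶠ[𝓝 a] φ := by
    refine (hconst.deriv.trans ?_).symm.trans hderiv
    simp
  exact hs.ne' ((hφ.congr_of_eventuallyEq hφ0).unique (hasDerivAt_const a 0))

section LineDerivatives

variable {n : ℕ} {u : Eucl n → ℝ} {x : Eucl n}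

theorem hasDerivAt_add_smul {E : Type*} [NormedAddCommGroup E] [NormedSpace ℝ E] (x v : E)
    (t : ℝ) : HasDerivAt (fun t : ℝ => x + t • v) v t := by
  simpa using ((hasDerivAt_id t).smul_const v).const_add x

theorem ContDiffAt.eventually_hasDerivAt_line (hu : ContDiffAt ℝ 2 u x) (i : Fin n) :
    ∀ᶠ t in 𝓝 (0 : ℝ), HasDerivAt (fun t => u (x + t • 𝐞 i)) (pd n u (x + t • 𝐞 i) i) t := by
  have hline : Tendsto (fun t : ℝ => x + t • 𝐞 i) (𝓝 0) (𝓝 x) := by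
    simpa using (hasDerivAt_add_smul x (𝐞 i) 0).continuousAt.tendsto
  filter_upwards [hline.eventually (hu.eventually (by simp))] with t ht
  exact (ht.differentiableAt (by simp)).hasFDerivAt.comp_hasDerivAt t (hasDerivAt_add_smul _ _ t)

theorem ContDiffAt.hasDerivAt_line_pd (hu : ContDiffAt ℝ 2 u x) (i : Fin n) :
    HasDerivAt (fun t : ℝ => pd n u (x + t • 𝐞 i) i) (pd2 n u x i i) 0 := by
  have hpd : DifferentiableAt ℝ (fun y => pd n u y i) x :=
    ((hu.fderiv_right (m := 1) le_rfl).differentiableAt one_ne_zero).clm_apply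
      (differentiableAt_const _)
  exact hpd.hasFDerivAt.comp_hasDerivAt_of_eq 0 (hasDerivAt_add_smul _ _ 0) (by simp)

theorem ContDiffAt.pd2_eq_of_hasDerivAt_line (hu : ContDiffAt ℝ 2 u x) {i : Fin n}
    {g : ℝ → ℝ} {s : ℝ} (hg : ∀ᶠ t in 𝓝 0, HasDerivAt (fun t => u (x + t • 𝐞 i)) (g t) t)
    (hgs : HasDerivAt g s 0) : pd2 n u x i i = s := by
  have hpd : (fun t => pd n u (x + t • 𝐞 i) i) =ᶠ[𝓝 0] g :=
    (hu.eventually_hasDerivAt_line i).and hg |>.mono fun t ht => ht.1.unique ht.2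
  exact ((hu.hasDerivAt_line_pd i).congr_of_eventuallyEq hpd.symm).unique hgs

theorem pd2_le_of_isLocalMax_sub {U : Eucl n → ℝ} (hu : ContDiffAt ℝ 2 u x)
    (hU : ContDiffAt ℝ 2 U x) (hmax : IsLocalMax (u - U) x) (i : Fin n) :
    pd2 n u x i i ≤ pd2 n U x i i := by
  have hline : IsLocalMax (fun t : ℝ => (u - U) (x + t • 𝐞 i)) 0 :=
    IsLocalMax.comp_continuous (g := fun t : ℝ => x + t • 𝐞 i) (by simpa using hmax)
      (hasDerivAt_add_smul x (𝐞 i) 0).continuousAt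
  have := hline.second_deriv_nonpos
    ((hu.eventually_hasDerivAt_line i).and (hU.eventually_hasDerivAt_line i) |>.mono
      fun t ht => ht.1.sub ht.2)
    ((hu.hasDerivAt_line_pd i).sub (hU.hasDerivAt_line_pd i))
  linarith

theorem laplace_le_of_isLocalMax_sub {U : Eucl n → ℝ} (hu : ContDiffAt ℝ 2 u x)
    (hU : ContDiffAt ℝ 2 U x) (hmax : IsLocalMax (u - U) x) : laplace n u x ≤ laplace n U x :=
  Finset.sum_le_sum fun i _ => pd2_le_of_isLocalMax_sub hu hU hmax i

end LineDerivatives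

section Barrier

variable {n : ℕ} {α A R : ℝ} {y : Eucl n}

def barrier (α A R : ℝ) (y : Eucl n) : ℝ := A * (R ^ 2 - ‖y‖ ^ 2) ^ (-α)

theorem norm_add_smul_single_sq (y : Eucl n) (i : Fin n) (t : ℝ) :
    ‖y + t • 𝐞 i‖ ^ 2 = ‖y‖ ^ 2 + 2 * y i * t + t ^ 2 := by
  rw [norm_add_sq_real, inner_smul_right, EuclideanSpace.inner_single_right, norm_smul,
      PiLp.norm_single]
  simp only [Real.ringHom_apply, one_mul, Real.norm_eq_abs, norm_one, mul_one, sq_abs]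
  ring

theorem sq_sub_sq_norm_pos (hy : ‖y‖ < R) : 0 < R ^ 2 - ‖y‖ ^ 2 := by
  nlinarith [norm_nonneg y]

theorem contDiffAt_barrier (hy : ‖y‖ < R) : ContDiffAt ℝ 2 (barrier α A R) y :=
  contDiffAt_const.mul ((contDiffAt_const.sub (contDiff_norm_sq ℝ).contDiffAt).rpow_const_of_ne
    (sq_sub_sq_norm_pos hy).ne')

theorem pd2_barrier (hy : ‖y‖ < R) (i : Fin n) :
    pd2 n (barrier α A R) y i i = 2 * A * α *
      ((R ^ 2 - ‖y‖ ^ 2) ^ (-α - 1) + 2 * (α + 1) * y i ^ 2 * (R ^ 2 - ‖y‖ ^ 2) ^ (-α - 2)) := by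
  set q : ℝ → ℝ := fun t => R ^ 2 - (‖y‖ ^ 2 + 2 * y i * t + t ^ 2) with hq_def
  have hq (t : ℝ) : HasDerivAt q (-(2 * y i + 2 * t)) t :=
    (((((hasDerivAt_id t).const_mul (2 * y i)).const_add (‖y‖ ^ 2)).add
      ((hasDerivAt_id t).pow 2)).const_sub (R ^ 2)).congr_deriv (by simp)
  have hq0 : q 0 = R ^ 2 - ‖y‖ ^ 2 := by simp [hq_def]
  have hq0_pos : 0 < q 0 := hq0 ▸ sq_sub_sq_norm_pos hy
  have hline (t : ℝ) : barrier α A R (y + t • 𝐞 i) = A * q t ^ (-α) := by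
    rw [barrier, norm_add_smul_single_sq]
  refine (contDiffAt_barrier hy).pd2_eq_of_hasDerivAt_line
    (g := fun t => 2 * A * α * ((y i + t) * q t ^ (-α - 1))) ?_ ?_
  · filter_upwards [(hq 0).continuousAt.eventually (lt_mem_nhds hq0_pos)] with t ht
    simp_rw [hline]
    exact (((hq t).rpow_const (Or.inl ht.ne')).const_mul A).congr_deriv (by ring)
  · refine ((((hasDerivAt_id (0 : ℝ)).const_add (y i)).mul
      ((hq 0).rpow_const (p := -α - 1) (Or.inl hq0_pos.ne'))).const_mul (2 * A * α)).congr_deriv ?_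
    rw [hq0, show -α - 1 - 1 = -α - 2 by ring, id]
    ring

theorem laplace_barrier_le {p c : ℝ} (hα : 0 < α) (hαp : α * (p - 1) = 2) (hA : 0 < A)
    (hcA : c * A ^ (p - 1) = 2 * α * (n + 2 * α + 2) * R ^ 2) (hy : ‖y‖ < R) :
    laplace n (barrier α A R) y ≤ c * barrier α A R y ^ p := by
  set q := R ^ 2 - ‖y‖ ^ 2
  have hq : 0 < q := sq_sub_sq_norm_pos hy
  have hlap : laplace n (barrier α A R) y
      = 2 * A * α * (n * q ^ (-α - 1) + 2 * (α + 1) * ‖y‖ ^ 2 * q ^ (-α - 2)) := by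
    simp only [laplace, pd2_barrier hy, ← Finset.mul_sum, Finset.sum_add_distrib, ← Finset.sum_mul,
      ← EuclideanSpace.real_norm_sq_eq, Finset.sum_const, Finset.card_univ, Fintype.card_fin,
      nsmul_eq_mul]
    rfl
  have hq1 : q ^ (-α - 1) = q * q ^ (-α - 2) := by
    rw [← Real.rpow_one_add' hq.le (by linarith)]
    ring_nf
  have hUp : c * barrier α A R y ^ p = 2 * α * (n + 2 * α + 2) * R ^ 2 * A * q ^ (-α - 2) := by
    rw [barrier, Real.mul_rpow hA.le (Real.rpow_nonneg hq.le _), ← Real.rpow_mul hq.le,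
      show -α * p = -α - 2 by linarith, ← hcA, Real.rpow_sub_one hA.ne']
    field_simp
  rw [hlap, hUp, hq1]
  calc 2 * A * α * (n * (q * q ^ (-α - 2)) + 2 * (α + 1) * ‖y‖ ^ 2 * q ^ (-α - 2))
      = 2 * A * α * q ^ (-α - 2) * (n * q + (2 * α + 2) * ‖y‖ ^ 2) := by ring
    _ ≤ 2 * A * α * q ^ (-α - 2) * (n * R ^ 2 + (2 * α + 2) * R ^ 2) := by
        gcongr
        linarith [sq_nonneg ‖y‖]
    _ = 2 * α * (n + 2 * α + 2) * R ^ 2 * A * q ^ (-α - 2) := by ring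

theorem exists_lt_forall_le_barrier (hR : 0 < R) (hα : 0 < α) (hA : 0 < A) (M : ℝ) :
    ∃ r < R, ∀ y : Eucl n, r < ‖y‖ → ‖y‖ < R → M ≤ barrier α A R y := by
  have hq : Tendsto (fun s : ℝ => R ^ 2 - s ^ 2) (𝓝[<] R) (𝓝[>] 0) := by
    refine tendsto_nhdsWithin_iff.2 ⟨?_, ?_⟩
    · have : Continuous fun s : ℝ => R ^ 2 - s ^ 2 := by fun_prop
      exact (this.tendsto' R 0 (by simp)).mono_left nhdsWithin_le_nhds
    · filter_upwards [Ioo_mem_nhdsLT (neg_lt_self hR)] with s hs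
      simp only [Set.mem_Ioi, sub_pos]
      nlinarith [hs.1, hs.2]
  have hlim : Tendsto (fun s : ℝ => A * (R ^ 2 - s ^ 2) ^ (-α)) (𝓝[<] R) atTop :=
    ((tendsto_rpow_neg_nhdsGT_zero (neg_lt_zero.2 hα)).comp hq).const_mul_atTop hA
  obtain ⟨r, hrR, hr⟩ := mem_nhdsLT_iff_exists_Ioo_subset.1 (hlim.eventually_ge_atTop M)
  exact ⟨r, hrR, fun y h1 h2 => hr ⟨h1, h2⟩⟩

end Barrier

section KellerOsserman

variable {n : ℕ} {p c : ℝ} {u : Eucl n → ℝ}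

theorem le_of_laplace_comparison {Ω : Set (Eucl n)} (hΩ : IsOpen Ω) {U : Eucl n → ℝ}
    (hc : 0 < c) (hp : 0 < p) (hu : ∀ x ∈ Ω, ContDiffAt ℝ 2 u x)
    (hU : ∀ x ∈ Ω, ContDiffAt ℝ 2 U x) (hu0 : ∀ x ∈ Ω, 0 ≤ u x) (hU0 : ∀ x ∈ Ω, 0 ≤ U x)
    (hsub : ∀ x ∈ Ω, c * u x ^ p ≤ laplace n u x)
    (hsuper : ∀ x ∈ Ω, laplace n U x ≤ c * U x ^ p)
    (hblow : ∀ M, ∃ K ⊆ Ω, IsCompact K ∧ ∀ y ∈ Ω \ K, M ≤ U y - u y)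
    {x : Eucl n} (hx : x ∈ Ω) : u x ≤ U x := by
  obtain ⟨K, hKΩ, hK, hKout⟩ := hblow (U x - u x)
  have hxKΩ : insert x K ⊆ Ω := Set.insert_subset hx hKΩ
  obtain ⟨x₀, hx₀, hmax⟩ := (hK.insert x).exists_isMaxOn (Set.insert_nonempty x K)
    fun y hy => ((hu y (hxKΩ hy)).continuousAt.sub (hU y (hxKΩ hy)).continuousAt).continuousWithinAt
  have hx_le : u x - U x ≤ u x₀ - U x₀ := hmax (Set.mem_insert x K)
  have hglobal : ∀ y ∈ Ω, (u - U) y ≤ (u - U) x₀ := by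
    intro y hy
    by_cases hyK : y ∈ insert x K
    · exact hmax hyK
    · have := hKout y ⟨hy, fun h => hyK (Set.mem_insert_of_mem x h)⟩
      simp only [Pi.sub_apply]
      linarith
  have hx₀Ω : x₀ ∈ Ω := hxKΩ hx₀
  have hlap := laplace_le_of_isLocalMax_sub (hu x₀ hx₀Ω) (hU x₀ hx₀Ω)
    (Filter.mem_of_superset (hΩ.mem_nhds hx₀Ω) hglobal)
  have hpow : u x₀ ^ p ≤ U x₀ ^ p :=
    le_of_mul_le_mul_left ((hsub x₀ hx₀Ω).trans (hlap.trans (hsuper x₀ hx₀Ω))) hc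
  have := (Real.rpow_le_rpow_iff (hu0 x₀ hx₀Ω) (hU0 x₀ hx₀Ω) hp).1 hpow
  linarith

theorem le_barrier_of_mul_rpow_le_laplace {α A R : ℝ} (hα : 0 < α) (hαp : α * (p - 1) = 2)
    (hc : 0 < c) (hu : ContDiff ℝ 2 u) (hpos : ∀ x, 0 < u x)
    (hsub : ∀ x, c * u x ^ p ≤ laplace n u x) (hA : 0 < A) (hR : 0 < R)
    (hcA : c * A ^ (p - 1) = 2 * α * (n + 2 * α + 2) * R ^ 2) {y : Eucl n} (hy : ‖y‖ < R) :
    u y ≤ barrier α A R y := by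
  obtain ⟨z, -, hz⟩ := (isCompact_closedBall (0 : Eucl n) R).exists_isMaxOn
    ⟨0, mem_closedBall_self hR.le⟩ hu.continuous.continuousOn
  refine le_of_laplace_comparison isOpen_ball hc (by nlinarith) (fun x _ => hu.contDiffAt)
    (fun x hx => contDiffAt_barrier (mem_ball_zero_iff.1 hx)) (fun x _ => (hpos x).le)
    (fun x hx => ?_) (fun x _ => hsub x)
    (fun x hx => laplace_barrier_le hα hαp hA hcA (mem_ball_zero_iff.1 hx))
    (fun M => ?_) (mem_ball_zero_iff.2 hy)
  · exact mul_nonneg hA.le (Real.rpow_nonneg (sq_sub_sq_norm_pos (mem_ball_zero_iff.1 hx)).le _)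
  · obtain ⟨r, hrR, hr⟩ := exists_lt_forall_le_barrier hR hα hA (M + u z)
    refine ⟨closedBall 0 r, closedBall_subset_ball hrR, isCompact_closedBall 0 r, ?_⟩
    rintro x ⟨hxR, hxr⟩
    rw [mem_ball_zero_iff] at hxR
    rw [mem_closedBall_zero_iff, not_le] at hxr
    have : u x ≤ u z := hz (ball_subset_closedBall (mem_ball_zero_iff.2 hxR))
    have := hr x hxr hxR
    linarith

theorem not_forall_mul_rpow_le_laplace (hp : 1 < p) (hc : 0 < c) (hu : ContDiff ℝ 2 u)
    (hpos : ∀ x, 0 < u x) : ¬ ∀ x, c * u x ^ p ≤ laplace n u x := by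
  intro hsub
  set α := 2 / (p - 1) with hα_def
  have hα : 0 < α := div_pos two_pos (by linarith)
  set K := 2 * α * (n + 2 * α + 2)
  have hK : 0 < K := by positivity
  set a := (K / c) ^ (p - 1)⁻¹ with ha_def
  have ha : 0 < a := by positivity
  have hbound : ∀ R > 0, u 0 ≤ a * R ^ (-α) := by
    intro R hR
    have hcA : c * (a * R ^ α) ^ (p - 1) = K * R ^ 2 := by
      rw [Real.mul_rpow ha.le (Real.rpow_nonneg hR.le _), ← Real.rpow_mul hR.le, ha_def,
        Real.rpow_inv_rpow (by positivity) (by linarith), hα_def, div_mul_cancel₀ _ (by linarith)]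
      field_simp
      norm_cast
    have := le_barrier_of_mul_rpow_le_laplace hα (div_mul_cancel₀ _ (by linarith)) hc hu hpos hsub
      (by positivity) hR hcA (y := 0) (by simpa using hR)
    convert this using 1
    rw [barrier, norm_zero, zero_pow two_ne_zero, sub_zero, ← Real.rpow_natCast,
      ← Real.rpow_mul hR.le, mul_assoc, ← Real.rpow_add hR]
    ring_nf
  have hlim : Tendsto (fun R : ℝ => a * R ^ (-α)) atTop (𝓝 0) := by
    simpa using (tendsto_rpow_neg_atTop hα).const_mul a
  obtain ⟨R, hR, hR0⟩ := ((hlim.eventually (gt_mem_nhds (hpos 0))).and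
    (eventually_gt_atTop 0)).exists
  linarith [hbound R hR0]

end KellerOsserman

/-- Nonexistence of entire positive admissible solutions of (*) on ℝⁿ. -/
theorem stmt9 (n k : ℕ) (hn : 3 ≤ n) (hk1 : 1 ≤ k) (hkn : k ≤ n) :
    ¬ ∃ u : Eucl n → ℝ, ContDiff ℝ 2 u ∧ (∀ x, 0 < u x) ∧
      Admissible n k Set.univ u ∧ (∀ x, EqStar n k u x) := by
  rintro ⟨u, hu, hpos, hadm, heq⟩
  have hn' : (3 : ℝ) ≤ n := by exact_mod_cast hn
  have hC : 0 < (n.choose k : ℝ) ^ ((1 : ℝ) / k) :=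
    Real.rpow_pos_of_pos (by exact_mod_cast Nat.choose_pos hkn) _
  refine not_forall_mul_rpow_le_laplace ?_ (div_pos (by linarith) (by nlinarith)) hu hpos
    fun x => mul_rpow_le_laplace_of_eqStar hn hk1 hkn (hpos x) (hadm x trivial) (heq x)
  rw [one_lt_div (by linarith)]
  linarith
end
end
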